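/- arXiv:2407.20105 — 5 statements merged into one kernel-verified Lean document; each statement's English description precedes it below -/
import Mathlib

section
/- Any optimal solution p* of the problem min_{p*} max_{i∈{1,2}} (KL(p* ∥ pⁱ) + cᵢ), where p¹, p² are full-support distributions on a finite alphabet V and c₁, c₂ ∈ ℝ, satisfies log p*(y) = α log p¹(y) + β log p²(y) + γ for all y ∈ V, for some α, β ≥ 0 with α + β = 1 (allowing the degenerate cases (α,β) = (1,0) or (0,1)) and some γ ∈ ℝ; equivalently, p* is a geometric mixture p*(y) ∝ p¹(y)^α p²(y)^{1−α} for some α ∈ [0,1]. -/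
noncomputable def KL {V : Type*} [Fintype V] (q p : V → ℝ) : ℝ :=
  ∑ y, q y * Real.log (q y / p y)

def IsDist {V : Type*} [Fintype V] (p : V → ℝ) : Prop :=
  (∀ y, 0 ≤ p y) ∧ ∑ y, p y = 1

def FullSupport {V : Type*} (p : V → ℝ) : Prop := ∀ y, 0 < p y

lemma kl_self {V : Type*} [Fintype V] (r : V → ℝ) (hr : ∀ y, 0 < r y) : KL r r = 0 := by
  unfold KL
  apply Finset.sum_eq_zero
  intro y _
  rw [div_self (hr y).ne', Real.log_one, mul_zero]

lemma gibbs {V : Type*} [Fintype V] {q r : V → ℝ} (hq : IsDist q) (hr : IsDist r)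
    (hrs : ∀ y, 0 < r y) (h : KL q r ≤ 0) : q = r := by
  by_contra hne
  rw [funext_iff] at hne
  push_neg at hne
  obtain ⟨y0, hy0⟩ := hne
  have hsum : ∑ y, (q y * Real.log (q y / r y) - q y + r y) = KL q r := by
    unfold KL
    rw [Finset.sum_add_distrib, Finset.sum_sub_distrib, hq.2, hr.2]
    ring
  have hpt : ∀ y, 0 ≤ q y * Real.log (q y / r y) - q y + r y := by
    intro y
    rcases eq_or_lt_of_le (hq.1 y) with h0 | h0
    · simp [← h0, (hrs y).le]
    · have hlog := Real.log_le_sub_one_of_pos (div_pos (hrs y) h0)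
      have hlg : Real.log (q y / r y) = - Real.log (r y / q y) := by
        rw [← Real.log_inv, inv_div]
      rw [hlg]
      have hq' : q y * (r y / q y - 1) = r y - q y := by field_simp
      nlinarith [mul_le_mul_of_nonneg_left hlog h0.le]
  have hpt0 : 0 < q y0 * Real.log (q y0 / r y0) - q y0 + r y0 := by
    rcases eq_or_lt_of_le (hq.1 y0) with h0 | h0
    · simp [← h0, hrs y0]
    · have hne1 : r y0 / q y0 ≠ 1 :=
        fun h1 => hy0 (((div_eq_one_iff_eq h0.ne').mp h1).symm)

      have hlog := Real.log_lt_sub_one_of_pos (div_pos (hrs y0) h0) hne1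
      have hlg : Real.log (q y0 / r y0) = - Real.log (r y0 / q y0) := by
        rw [← Real.log_inv, inv_div]
      rw [hlg]
      have hq' : q y0 * (r y0 / q y0 - 1) = r y0 - q y0 := by field_simp
      nlinarith [mul_lt_mul_of_pos_left hlog h0]
  have : 0 < ∑ y, (q y * Real.log (q y / r y) - q y + r y) :=
    Finset.sum_pos' (fun y _ => hpt y) ⟨y0, Finset.mem_univ _, hpt0⟩
  rw [hsum] at this
  linarith

lemma decomp {V : Type*} [Fintype V] (p1 p2 : V → ℝ) (hs1 : ∀ y, 0 < p1 y)
    (hs2 : ∀ y, 0 < p2 y) (α : ℝ) (q : V → ℝ) (hq0 : ∀ y, 0 ≤ q y) (hq1 : ∑ y, q y = 1)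
    (Z : ℝ) (hZpos : 0 < Z) :
    α * KL q p1 + (1 - α) * KL q p2
      = KL q (fun y => Real.exp (α * Real.log (p1 y) + (1 - α) * Real.log (p2 y)) / Z)
        - Real.log Z := by
  have key : ∀ y, α * (q y * Real.log (q y / p1 y)) + (1 - α) * (q y * Real.log (q y / p2 y))
      = q y * Real.log (q y / (Real.exp (α * Real.log (p1 y) + (1 - α) * Real.log (p2 y)) / Z))
        - q y * Real.log Z := by
    intro y
    rcases eq_or_lt_of_le (hq0 y) with h0 | h0
    · simp [← h0]
    · rw [Real.log_div h0.ne' (hs1 y).ne', Real.log_div h0.ne' (hs2 y).ne',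
        Real.log_div h0.ne' (div_pos (Real.exp_pos _) hZpos).ne',
        Real.log_div (Real.exp_pos _).ne' hZpos.ne', Real.log_exp]
      ring
  calc α * KL q p1 + (1 - α) * KL q p2
      = ∑ y, (α * (q y * Real.log (q y / p1 y)) + (1 - α) * (q y * Real.log (q y / p2 y))) := by
        unfold KL; rw [Finset.mul_sum, Finset.mul_sum, Finset.sum_add_distrib]
    _ = ∑ y, (q y * Real.log (q y / (Real.exp (α * Real.log (p1 y) + (1 - α) * Real.log (p2 y)) / Z))
          - q y * Real.log Z) := Finset.sum_congr rfl (fun y _ => key y)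
    _ = _ := by
        rw [Finset.sum_sub_distrib, ← Finset.sum_mul, hq1, one_mul]; rfl

lemma kl_shift {V : Type*} [Fintype V] (p1 p2 q : V → ℝ) (hs1 : ∀ y, 0 < p1 y)
    (hs2 : ∀ y, 0 < p2 y) (hq0 : ∀ y, 0 ≤ q y) :
    KL q p2 = KL q p1 + ∑ y, q y * Real.log (p1 y / p2 y) := by
  unfold KL
  rw [← Finset.sum_add_distrib]
  apply Finset.sum_congr rfl
  intro y _
  rcases eq_or_lt_of_le (hq0 y) with h0 | h0
  · simp [← h0]
  · rw [Real.log_div h0.ne' (hs1 y).ne', Real.log_div h0.ne' (hs2 y).ne',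
      Real.log_div (hs1 y).ne' (hs2 y).ne']
    ring
theorem stmt_3 {V : Type*} [Fintype V] [Nonempty V] (p1 p2 : V → ℝ)
    (hp1 : IsDist p1) (hp2 : IsDist p2)
    (hs1 : FullSupport p1) (hs2 : FullSupport p2) (c1 c2 : ℝ)
    (p : V → ℝ) (hp : IsDist p)
    (hmin : ∀ q : V → ℝ, IsDist q →
      max (KL p p1 + c1) (KL p p2 + c2) ≤ max (KL q p1 + c1) (KL q p2 + c2)) :
    ∃ α β γ : ℝ, 0 ≤ α ∧ 0 ≤ β ∧ α + β = 1 ∧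
      ∀ y, Real.log (p y) = α * Real.log (p1 y) + β * Real.log (p2 y) + γ := by
  by_cases hc1 : KL p1 p2 + c2 ≤ c1
  · -- p = p1
    have h1 := hmin p1 hp1
    rw [kl_self p1 hs1, zero_add, max_eq_left hc1] at h1
    have hA := le_max_left (KL p p1 + c1) (KL p p2 + c2)
    have hkl : KL p p1 ≤ 0 := by linarith
    have hpe := gibbs hp hp1 hs1 hkl
    exact ⟨1, 0, 0, by norm_num, le_refl 0, by norm_num,
      fun y => by rw [hpe]; ring⟩
  by_cases hc2 : KL p2 p1 + c1 ≤ c2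
  · -- p = p2
    have h1 := hmin p2 hp2
    rw [kl_self p2 hs2, zero_add, max_eq_right hc2] at h1
    have hB := le_max_right (KL p p1 + c1) (KL p p2 + c2)
    have hkl : KL p p2 ≤ 0 := by linarith
    have hpe := gibbs hp hp2 hs2 hkl
    exact ⟨0, 1, 0, le_refl 0, by norm_num, by norm_num,
      fun y => by rw [hpe]; ring⟩
  push_neg at hc1 hc2
  -- geometric mixture family
  set G : ℝ → V → ℝ :=
    fun α y => Real.exp (α * Real.log (p1 y) + (1 - α) * Real.log (p2 y)) with hG
  set Z : ℝ → ℝ := fun α => ∑ y, G α y with hZ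
  have hZpos : ∀ α, 0 < Z α :=
    fun α => Finset.sum_pos (fun y _ => Real.exp_pos _) Finset.univ_nonempty
  set φ : ℝ → ℝ :=
    fun α => (∑ y, (G α y / Z α) * Real.log (p1 y / p2 y)) + c2 - c1 with hφ
  have hG1 : ∀ y, G 1 y = p1 y := by
    intro y
    simp [hG, Real.exp_log (hs1 y)]
  have hG0 : ∀ y, G 0 y = p2 y := by
    intro y
    simp [hG, Real.exp_log (hs2 y)]
  have hZ1 : Z 1 = 1 := by simp [hZ, hG1, hp1.2]
  have hZ0 : Z 0 = 1 := by simp [hZ, hG0, hp2.2]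
  have hφ1 : 0 < φ 1 := by
    have : ∑ y, (G 1 y / Z 1) * Real.log (p1 y / p2 y) = KL p1 p2 := by
      rw [hZ1]
      apply Finset.sum_congr rfl
      intro y _
      rw [hG1 y, div_one]
    simp only [hφ, this]
    linarith
  have hφ0 : φ 0 < 0 := by
    have : ∑ y, (G 0 y / Z 0) * Real.log (p1 y / p2 y) = - KL p2 p1 := by
      rw [hZ0, KL, ← Finset.sum_neg_distrib]
      apply Finset.sum_congr rfl
      intro y _
      rw [hG0 y, div_one,
        show Real.log (p1 y / p2 y) = - Real.log (p2 y / p1 y) from by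
          rw [← Real.log_inv, inv_div]]
      ring
    simp only [hφ, this]
    linarith
  -- continuity and IVT
  have hGc : ∀ y, Continuous (fun α => G α y) := by
    intro y
    apply Real.continuous_exp.comp
    continuity
  have hZc : Continuous Z := continuous_finset_sum _ (fun y _ => hGc y)
  have hφc : Continuous φ := by
    apply Continuous.sub _ continuous_const
    apply Continuous.add _ continuous_const
    exact continuous_finset_sum _ (fun y _ =>
      ((hGc y).div hZc (fun α => (hZpos α).ne')).mul continuous_const)
  have hIVT := intermediate_value_Icc (zero_le_one (α := ℝ)) hφc.continuousOn
  have h0mem : (0 : ℝ) ∈ Set.Icc (φ 0) (φ 1) := ⟨hφ0.le, hφ1.le⟩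
  obtain ⟨α, hαmem, hφα⟩ := hIVT h0mem
  obtain ⟨hα0, hα1⟩ := hαmem
  set r : V → ℝ := fun y => G α y / Z α with hr
  have hrpos : ∀ y, 0 < r y := fun y => div_pos (Real.exp_pos _) (hZpos α)
  have hrdist : IsDist r := by
    constructor
    · exact fun y => (hrpos y).le
    · rw [hr, ← Finset.sum_div]
      exact div_self (hZpos α).ne'
  -- φ α = 0 gives equality of the two objectives at r
  have hshift := kl_shift p1 p2 r hs1 hs2 (fun y => (hrpos y).le)
  have hrsum : ∑ y, r y * Real.log (p1 y / p2 y) = c1 - c2 := by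
    have : (∑ y, (G α y / Z α) * Real.log (p1 y / p2 y)) + c2 - c1 = 0 := hφα
    simp only [hr]
    linarith
  have heq : KL r p2 + c2 = KL r p1 + c1 := by rw [hshift, hrsum]; ring
  -- decomposition at q = r
  have hdr := decomp p1 p2 hs1 hs2 α r (fun y => (hrpos y).le) hrdist.2 (Z α) (hZpos α)
  have hrr : KL r (fun y => G α y / Z α) = 0 := kl_self _ hrpos
  rw [hrr] at hdr
  -- decomposition at q = p
  have hdp := decomp p1 p2 hs1 hs2 α p hp.1 hp.2 (Z α) (hZpos α)
  -- minimality chain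
  have h1 := hmin r hrdist
  have hmaxr : max (KL r p1 + c1) (KL r p2 + c2) = KL r p1 + c1 := by
    rw [heq]; exact max_self _
  rw [hmaxr] at h1
  have hF : α * (KL p p1 + c1) + (1 - α) * (KL p p2 + c2)
      ≤ max (KL p p1 + c1) (KL p p2 + c2) := by
    have t1 := mul_le_mul_of_nonneg_left
      (le_max_left (KL p p1 + c1) (KL p p2 + c2)) hα0
    have t2 := mul_le_mul_of_nonneg_left
      (le_max_right (KL p p1 + c1) (KL p p2 + c2)) (by linarith : (0:ℝ) ≤ 1 - α)
    nlinarith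
  have hklpr : KL p (fun y => G α y / Z α) ≤ 0 := by nlinarith
  have hpe := gibbs hp hrdist hrpos (by rw [hr]; exact hklpr)
  refine ⟨α, 1 - α, - Real.log (Z α), hα0, by linarith, by ring, fun y => ?_⟩
  have : p y = G α y / Z α := by rw [hpe]
  rw [this, Real.log_div (Real.exp_pos _).ne' (hZpos α).ne', Real.log_exp]
  ring
end

section
/- Let p¹, p² be full-support probability distributions on a finite alphabet V with p¹ ≠ p², and let c₁ < c₂ be real constants. Let p* minimize max_i (KL(p* ∥ pⁱ) + cᵢ). Then either (1) KL(p* ∥ p¹) + c₁ = KL(p* ∥ p²) + c₂ (the two constraints are simultaneously tight), or (2) p* = p². -/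
lemma term_ge (q p : ℝ) (hq : 0 ≤ q) (hp : 0 < p) : q - p ≤ q * Real.log (q / p) := by
  rcases eq_or_lt_of_le hq with h | h
  · simp [← h]; linarith
  · have h1 : Real.log (p / q) ≤ p / q - 1 := Real.log_le_sub_one_of_pos (by positivity)
    have h2 : Real.log (q / p) = - Real.log (p / q) := by
      rw [← Real.log_inv]; congr 1; field_simp
    rw [h2]
    have hpq : q * (p / q) = p := by field_simp
    nlinarith [mul_le_mul_of_nonneg_left h1 (le_of_lt h)]

lemma term_gt (q p : ℝ) (hq : 0 ≤ q) (hp : 0 < p) (hne : q ≠ p) :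
    q - p < q * Real.log (q / p) := by
  rcases eq_or_lt_of_le hq with h | h
  · simp [← h]; linarith [hp]
  · have hne1 : p / q ≠ 1 := by
      intro habs
      apply hne
      field_simp at habs
      linarith
    have h1 : Real.log (p / q) < p / q - 1 :=
      Real.log_lt_sub_one_of_pos (by positivity) hne1
    have h2 : Real.log (q / p) = - Real.log (p / q) := by
      rw [← Real.log_inv]; congr 1; field_simp
    rw [h2]
    have hpq : q * (p / q) = p := by field_simp
    nlinarith [mul_lt_mul_of_pos_left h1 h]

lemma kl_nonneg {V : Type*} [Fintype V] (q p : V → ℝ) (hq : IsDist q) (hp : IsDist p)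
    (hps : FullSupport p) : 0 ≤ KL q p := by
  have h : ∑ y, (q y - p y) ≤ KL q p :=
    Finset.sum_le_sum fun y _ => term_ge _ _ (hq.1 y) (hps y)
  rw [Finset.sum_sub_distrib, hq.2, hp.2] at h
  linarith

lemma kl_pos {V : Type*} [Fintype V] (q p : V → ℝ) (hq : IsDist q) (hp : IsDist p)
    (hps : FullSupport p) (hne : q ≠ p) : 0 < KL q p := by
  obtain ⟨y0, hy0⟩ : ∃ y, q y ≠ p y := by
    by_contra h; push_neg at h; exact hne (funext h)
  have h : ∑ y, (q y - p y) < KL q p := by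
    apply Finset.sum_lt_sum (fun y _ => term_ge _ _ (hq.1 y) (hps y))
    exact ⟨y0, Finset.mem_univ _, term_gt _ _ (hq.1 y0) (hps y0) hy0⟩
  rw [Finset.sum_sub_distrib, hq.2, hp.2] at h
  linarith

lemma kl_self_s4 {V : Type*} [Fintype V] (p : V → ℝ) (hps : FullSupport p) : KL p p = 0 := by
  unfold KL
  apply Finset.sum_eq_zero
  intro y _
  rw [div_self (ne_of_gt (hps y)), Real.log_one, mul_zero]

lemma KL_eq {V : Type*} [Fintype V] (q p : V → ℝ) (hq : ∀ y, 0 ≤ q y) (hps : FullSupport p) :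
    KL q p = ∑ y, (q y * Real.log (q y) - q y * Real.log (p y)) := by
  unfold KL
  apply Finset.sum_congr rfl
  intro y _
  rcases eq_or_lt_of_le (hq y) with h | h
  · simp [← h]
  · rw [Real.log_div (ne_of_gt h) (ne_of_gt (hps y))]; ring

lemma kl_convex {V : Type*} [Fintype V] (q r p : V → ℝ) (hq : ∀ y, 0 ≤ q y)
    (hr : ∀ y, 0 ≤ r y) (hps : FullSupport p) (t : ℝ) (ht0 : 0 ≤ t) (ht1 : t ≤ 1) :
    KL (fun y => (1 - t) * q y + t * r y) p ≤ (1 - t) * KL q p + t * KL r p := by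
  have hmix : ∀ y, 0 ≤ (1 - t) * q y + t * r y := fun y => by
    have := hq y; have := hr y; nlinarith
  rw [KL_eq _ _ hmix hps, KL_eq _ _ hq hps, KL_eq _ _ hr hps,
    Finset.mul_sum, Finset.mul_sum, ← Finset.sum_add_distrib]
  apply Finset.sum_le_sum
  intro y _
  have hcv := Real.convexOn_mul_log.2 (Set.mem_Ici.2 (hq y)) (Set.mem_Ici.2 (hr y))
    (by linarith : (0:ℝ) ≤ 1 - t) ht0 (by ring)
  simp only [smul_eq_mul] at hcv
  nlinarith [hcv]

lemma key {V : Type*} [Fintype V] (pa pb p : V → ℝ) (ca cb : ℝ)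
    (ha : IsDist pa) (hpd : IsDist p) (hsa : FullSupport pa) (hsb : FullSupport pb)
    (hKL : 0 < KL p pa) (hlt : KL p pb + cb < KL p pa + ca)
    (hmin : ∀ q : V → ℝ, IsDist q →
      max (KL p pa + ca) (KL p pb + cb) ≤ max (KL q pa + ca) (KL q pb + cb)) : False := by
  set D : ℝ := KL pa pb - KL p pb with hD
  set δ : ℝ := (KL p pa + ca) - (KL p pb + cb) with hδ
  have hδpos : 0 < δ := by simp [hδ]; linarith
  set t : ℝ := min (1/2) (δ / (2 * (|D| + 1))) with ht
  have habs : 0 ≤ |D| := abs_nonneg D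
  have ht0 : 0 < t := by
    apply lt_min (by norm_num)
    positivity
  have ht1 : t ≤ 1 := le_trans (min_le_left _ _) (by norm_num)
  have htD : t * D < δ := by
    have h1 : t ≤ δ / (2 * (|D| + 1)) := min_le_right _ _
    have h2 : t * D ≤ t * |D| := mul_le_mul_of_nonneg_left (le_abs_self D) ht0.le
    have h3 : t * |D| ≤ (δ / (2 * (|D| + 1))) * |D| := mul_le_mul_of_nonneg_right h1 habs
    have h4 : (δ / (2 * (|D| + 1))) * |D| < δ := by
      rw [div_mul_eq_mul_div, div_lt_iff₀ (by positivity)]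
      nlinarith
    linarith
  set q : V → ℝ := fun y => (1 - t) * p y + t * pa y with hqdef
  have hqd : IsDist q := by
    constructor
    · intro y
      have := hpd.1 y; have := ha.1 y
      simp only [hqdef]
      nlinarith
    · simp only [hqdef]
      rw [Finset.sum_add_distrib, ← Finset.mul_sum, ← Finset.mul_sum, hpd.2, ha.2]
      ring
  have hca : KL q pa + ca < KL p pa + ca := by
    have h := kl_convex p pa pa hpd.1 ha.1 hsa t ht0.le ht1
    rw [kl_self_s4 pa hsa] at h
    have : KL q pa ≤ (1 - t) * KL p pa := by simpa [hqdef] using h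
    nlinarith
  have hcb : KL q pb + cb < KL p pa + ca := by
    have h := kl_convex p pa pb hpd.1 ha.1 hsb t ht0.le ht1
    have : KL q pb ≤ (1 - t) * KL p pb + t * KL pa pb := by simpa [hqdef] using h
    have hexp : (1 - t) * KL p pb + t * KL pa pb = KL p pb + t * D := by
      simp [hD]; ring
    rw [hexp] at this
    simp only [hδ] at htD
    linarith
  have := hmin q hqd
  rw [max_le_iff] at this
  have hlt2 := max_lt hca hcb
  linarith [this.1, lt_of_le_of_lt this.1 hlt2]

theorem stmt_4 {V : Type*} [Fintype V] [Nonempty V] (p1 p2 : V → ℝ)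
    (hp1 : IsDist p1) (hp2 : IsDist p2)
    (hs1 : FullSupport p1) (hs2 : FullSupport p2)
    (hne : p1 ≠ p2) (c1 c2 : ℝ) (hc : c1 < c2)
    (p : V → ℝ) (hp : IsDist p)
    (hmin : ∀ q : V → ℝ, IsDist q →
      max (KL p p1 + c1) (KL p p2 + c2) ≤ max (KL q p1 + c1) (KL q p2 + c2)) :
    KL p p1 + c1 = KL p p2 + c2 ∨ p = p2 := by
  by_contra h
  push_neg at h
  obtain ⟨hne', hne2⟩ := h
  rcases lt_or_gt_of_ne hne' with hA | hB
  · exact key p2 p1 p c2 c1 hp2 hp hs2 hs1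
      (kl_pos p p2 hp hp2 hs2 hne2) hA
      (fun q hq => by rw [max_comm (KL p p2 + c2), max_comm (KL q p2 + c2)]; exact hmin q hq)
  · have hpos : 0 < KL p p1 := by
      have := kl_nonneg p p2 hp hp2 hs2
      linarith
    exact key p1 p2 p c1 c2 hp1 hp hs1 hs2 hpos hB hmin
end

section
/- For full-support probability distributions p¹, p² on a finite alphabet V and α ∈ [0,1], let q_α(y) ∝ p¹(y)^α p²(y)^{1−α}. Then the map α ↦ KL(q_α ∥ p²) − KL(q_α ∥ p¹) = ∑_y q_α(y) log(p¹(y)/p²(y)) is continuous and monotonically nondecreasing in α, with value −KL(p²∥p¹) ≤ 0 at α = 0 and KL(p¹∥p²) ≥ 0 at α = 1. -/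
/-- The normalized geometric mixture `q_α(y) ∝ p¹(y)^α p²(y)^{1−α}`. -/
noncomputable def geoMix {V : Type*} [Fintype V] (p1 p2 : V → ℝ) (α : ℝ) : V → ℝ :=
  fun y => p1 y ^ α * p2 y ^ (1 - α) / ∑ y', p1 y' ^ α * p2 y' ^ (1 - α)

lemma KL_nonneg {V : Type*} [Fintype V] (p q : V → ℝ) (hp : IsDist p) (hq : IsDist q)
    (hsp : FullSupport p) (hsq : FullSupport q) : 0 ≤ KL p q := by
  have h : ∀ y, p y * Real.log (q y / p y) ≤ q y - p y := by
    intro y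
    have hpos : 0 < q y / p y := div_pos (hsq y) (hsp y)
    calc p y * Real.log (q y / p y) ≤ p y * (q y / p y - 1) :=
          mul_le_mul_of_nonneg_left (Real.log_le_sub_one_of_pos hpos) (hsp y).le
      _ = q y - p y := by
          rw [mul_sub, mul_div_cancel₀ _ (ne_of_gt (hsp y)), mul_one]
  have hsum : ∑ y, p y * Real.log (q y / p y) ≤ ∑ y, (q y - p y) :=
    Finset.sum_le_sum (fun y _ => h y)
  have h0 : ∑ y, (q y - p y) = 0 := by
    rw [Finset.sum_sub_distrib, hq.2, hp.2]; ring
  have hKL : KL p q = - ∑ y, p y * Real.log (q y / p y) := by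
    unfold KL
    rw [← Finset.sum_neg_distrib]
    refine Finset.sum_congr rfl fun y _ => ?_
    rw [Real.log_div (ne_of_gt (hsp y)) (ne_of_gt (hsq y)),
        Real.log_div (ne_of_gt (hsq y)) (ne_of_gt (hsp y))]
    ring
  rw [hKL]
  linarith

lemma cross_nonneg {a b α β : ℝ} (hab : α ≤ β) :
    0 ≤ (a - b) * (Real.exp (β * a + α * b) - Real.exp (β * b + α * a)) := by
  rcases le_total a b with h | h
  · have he : Real.exp (β * a + α * b) ≤ Real.exp (β * b + α * a) :=
      Real.exp_le_exp.mpr (by nlinarith)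
    nlinarith
  · have he : Real.exp (β * b + α * a) ≤ Real.exp (β * a + α * b) :=
      Real.exp_le_exp.mpr (by nlinarith)
    nlinarith

theorem stmt_6 {V : Type*} [Fintype V] [Nonempty V] (p1 p2 : V → ℝ)
    (hp1 : IsDist p1) (hp2 : IsDist p2)
    (hs1 : FullSupport p1) (hs2 : FullSupport p2) :
    ContinuousOn
      (fun α : ℝ => ∑ y, geoMix p1 p2 α y * Real.log (p1 y / p2 y)) (Set.Icc 0 1) ∧
    MonotoneOn
      (fun α : ℝ => ∑ y, geoMix p1 p2 α y * Real.log (p1 y / p2 y)) (Set.Icc 0 1) ∧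
    (∀ α : ℝ, ∑ y, geoMix p1 p2 α y * Real.log (p1 y / p2 y)
        = KL (geoMix p1 p2 α) p2 - KL (geoMix p1 p2 α) p1) ∧
    (∑ y, geoMix p1 p2 0 y * Real.log (p1 y / p2 y)) = - KL p2 p1 ∧
    (∑ y, geoMix p1 p2 1 y * Real.log (p1 y / p2 y)) = KL p1 p2 ∧
    (∑ y, geoMix p1 p2 0 y * Real.log (p1 y / p2 y)) ≤ 0 ∧
    0 ≤ ∑ y, geoMix p1 p2 1 y * Real.log (p1 y / p2 y) := by
  set L : V → ℝ := fun y => Real.log (p1 y) - Real.log (p2 y) with hL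
  have hlog : ∀ y, Real.log (p1 y / p2 y) = L y := fun y =>
    Real.log_div (ne_of_gt (hs1 y)) (ne_of_gt (hs2 y))
  -- numerator rewrite
  have hnum : ∀ (α : ℝ) y, p1 y ^ α * p2 y ^ (1 - α) = p2 y * Real.exp (α * L y) := by
    intro α y
    rw [Real.rpow_def_of_pos (hs1 y), Real.rpow_def_of_pos (hs2 y), ← Real.exp_add]
    conv_rhs => rw [← Real.exp_log (hs2 y), ← Real.exp_add]
    congr 1
    simp only [hL]
    ring
  set N : ℝ → ℝ := fun α => ∑ y, p2 y * Real.exp (α * L y) with hN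
  set M : ℝ → ℝ := fun α => ∑ y, p2 y * Real.exp (α * L y) * L y with hM
  have hNpos : ∀ α, 0 < N α := fun α =>
    Finset.sum_pos (fun y _ => mul_pos (hs2 y) (Real.exp_pos _)) Finset.univ_nonempty
  have hZ : ∀ α : ℝ, (∑ y', p1 y' ^ α * p2 y' ^ (1 - α)) = N α := by
    intro α
    exact Finset.sum_congr rfl fun y _ => hnum α y
  have hq : ∀ (α : ℝ) y, geoMix p1 p2 α y = p2 y * Real.exp (α * L y) / N α := by
    intro α y
    unfold geoMix
    rw [hZ, hnum]
  have hqpos : ∀ (α : ℝ) y, 0 < geoMix p1 p2 α y := by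
    intro α y
    rw [hq]
    exact div_pos (mul_pos (hs2 y) (Real.exp_pos _)) (hNpos α)
  have hfeq : (fun α : ℝ => ∑ y, geoMix p1 p2 α y * Real.log (p1 y / p2 y))
      = fun α => M α / N α := by
    funext α
    rw [hM]
    simp only []
    rw [Finset.sum_div]
    refine Finset.sum_congr rfl fun y _ => ?_
    rw [hq, hlog]
    ring
  -- continuity
  have hcontN : Continuous N := by
    apply continuous_finset_sum
    intro y _
    exact continuous_const.mul (Real.continuous_exp.comp (continuous_id.mul continuous_const))
  have hcontM : Continuous M := by
    apply continuous_finset_sum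
    intro y _
    exact (continuous_const.mul (Real.continuous_exp.comp
      (continuous_id.mul continuous_const))).mul continuous_const
  have hcont : Continuous fun α => M α / N α :=
    hcontM.div hcontN fun α => (hNpos α).ne'
  -- monotonicity: cross inequality
  have hmono : Monotone fun α => M α / N α := by
    intro α β hab
    rw [div_le_div_iff₀ (hNpos α) (hNpos β)]
    have key : 0 ≤ M β * N α - M α * N β := by
      have expand : M β * N α - M α * N β
          = ∑ i, ∑ j, (p2 i * Real.exp (β * L i) * L i * (p2 j * Real.exp (α * L j))
            - p2 i * Real.exp (α * L i) * L i * (p2 j * Real.exp (β * L j))) := by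
        simp only [hM, hN, Finset.sum_mul_sum]
        rw [← Finset.sum_sub_distrib]
        refine Finset.sum_congr rfl fun i _ => ?_
        rw [← Finset.sum_sub_distrib]
      set A : V → V → ℝ := fun i j =>
        p2 i * Real.exp (β * L i) * L i * (p2 j * Real.exp (α * L j))
          - p2 i * Real.exp (α * L i) * L i * (p2 j * Real.exp (β * L j)) with hA
      rw [expand]
      have hsym : ∀ i j, 0 ≤ A i j + A j i := by
        intro i j
        have h1 : A i j + A j i = p2 i * p2 j * ((L i - L j) *
            (Real.exp (β * L i + α * L j) - Real.exp (β * L j + α * L i))) := by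
          simp only [hA, Real.exp_add]
          ring
        rw [h1]
        exact mul_nonneg (mul_nonneg (hs2 i).le (hs2 j).le) (cross_nonneg hab)
      have h2 : (2:ℝ) * ∑ i, ∑ j, A i j = ∑ i, ∑ j, (A i j + A j i) := by
        simp only [Finset.sum_add_distrib]
        rw [Finset.sum_comm (f := fun j i => A j i)]
        ring
      have h3 : 0 ≤ ∑ i, ∑ j, (A i j + A j i) :=
        Finset.sum_nonneg fun i _ => Finset.sum_nonneg fun j _ => hsym i j
      linarith
    linarith
  refine ⟨?_, ?_, ?_, ?_, ?_, ?_, ?_⟩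
  · rw [hfeq]; exact hcont.continuousOn
  · rw [hfeq]; exact hmono.monotoneOn _
  · intro α
    unfold KL
    rw [← Finset.sum_sub_distrib]
    refine Finset.sum_congr rfl fun y _ => ?_
    have hqy := hqpos α y
    rw [hlog, Real.log_div (ne_of_gt hqy) (ne_of_gt (hs2 y)),
        Real.log_div (ne_of_gt hqy) (ne_of_gt (hs1 y))]
    simp only [hL]
    ring
  · have hq0 : ∀ y, geoMix p1 p2 0 y = p2 y := by
      intro y
      unfold geoMix
      simp only [Real.rpow_zero, sub_zero, Real.rpow_one, one_mul]
      rw [hp2.2, div_one]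
    unfold KL
    rw [← Finset.sum_neg_distrib]
    refine Finset.sum_congr rfl fun y _ => ?_
    rw [hq0, Real.log_div (ne_of_gt (hs1 y)) (ne_of_gt (hs2 y)),
        Real.log_div (ne_of_gt (hs2 y)) (ne_of_gt (hs1 y))]
    ring
  · have hq1 : ∀ y, geoMix p1 p2 1 y = p1 y := by
      intro y
      unfold geoMix
      simp only [Real.rpow_one, sub_self, Real.rpow_zero, mul_one]
      rw [hp1.2, div_one]
    unfold KL
    refine Finset.sum_congr rfl fun y _ => ?_
    rw [hq1]
  · have hq0 : ∀ y, geoMix p1 p2 0 y = p2 y := by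
      intro y
      unfold geoMix
      simp only [Real.rpow_zero, sub_zero, Real.rpow_one, one_mul]
      rw [hp2.2, div_one]
    have : ∑ y, geoMix p1 p2 0 y * Real.log (p1 y / p2 y) = - KL p2 p1 := by
      unfold KL
      rw [← Finset.sum_neg_distrib]
      refine Finset.sum_congr rfl fun y _ => ?_
      rw [hq0, Real.log_div (ne_of_gt (hs1 y)) (ne_of_gt (hs2 y)),
          Real.log_div (ne_of_gt (hs2 y)) (ne_of_gt (hs1 y))]
      ring
    rw [this]
    simp only [neg_nonpos]
    exact KL_nonneg p2 p1 hp2 hp1 hs2 hs1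
  · have hq1 : ∀ y, geoMix p1 p2 1 y = p1 y := by
      intro y
      unfold geoMix
      simp only [Real.rpow_one, sub_self, Real.rpow_zero, mul_one]
      rw [hp1.2, div_one]
    have : ∑ y, geoMix p1 p2 1 y * Real.log (p1 y / p2 y) = KL p1 p2 := by
      unfold KL
      refine Finset.sum_congr rfl fun y _ => ?_
      rw [hq1]
    rw [this]
    exact KL_nonneg p1 p2 hp1 hp2 hs1 hs2
end

section
/- For full-support distributions p¹, p² on a finite alphabet V and any real constants c₁, c₂, there exists α ∈ [0,1] such that the geometric mixture q_α(y) ∝ p¹(y)^α p²(y)^{1−α} satisfies either KL(q_α ∥ p¹) + c₁ = KL(q_α ∥ p²) + c₂, or α = 0 and KL(q_0 ∥ p¹) + c₁ ≤ KL(q_0 ∥ p²) + c₂, or α = 1 and KL(q_1 ∥ p²) + c₂ ≤ KL(q_1 ∥ p¹) + c₁. -/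
theorem stmt_7 {V : Type*} [Fintype V] [Nonempty V] (p1 p2 : V → ℝ)
    (hp1 : IsDist p1) (hp2 : IsDist p2)
    (hs1 : FullSupport p1) (hs2 : FullSupport p2) (c1 c2 : ℝ) :
    ∃ α ∈ Set.Icc (0 : ℝ) 1,
      KL (geoMix p1 p2 α) p1 + c1 = KL (geoMix p1 p2 α) p2 + c2 ∨
      (α = 0 ∧ KL (geoMix p1 p2 0) p1 + c1 ≤ KL (geoMix p1 p2 0) p2 + c2) ∨
      (α = 1 ∧ KL (geoMix p1 p2 1) p2 + c2 ≤ KL (geoMix p1 p2 1) p1 + c1) := by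
  classical
  -- positivity of the mixture
  have hqpos : ∀ (α : ℝ) (y : V), 0 < geoMix p1 p2 α y := by
    intro α y
    have hZ : 0 < ∑ y', p1 y' ^ α * p2 y' ^ (1 - α) := by
      apply Finset.sum_pos
      · intro i _
        exact mul_pos (Real.rpow_pos_of_pos (hs1 i) _) (Real.rpow_pos_of_pos (hs2 i) _)
      · exact Finset.univ_nonempty
    exact div_pos (mul_pos (Real.rpow_pos_of_pos (hs1 y) _)
      (Real.rpow_pos_of_pos (hs2 y) _)) hZ
  -- continuity of α ↦ geoMix p1 p2 α y
  have hterm : ∀ y : V, Continuous (fun α : ℝ => p1 y ^ α * p2 y ^ (1 - α)) := by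
    intro y
    exact (continuous_const.rpow continuous_id fun _ => Or.inl (hs1 y).ne').mul
      (continuous_const.rpow (continuous_const.sub continuous_id)
        fun _ => Or.inl (hs2 y).ne')
  have hZcont : Continuous (fun α : ℝ => ∑ y', p1 y' ^ α * p2 y' ^ (1 - α)) :=
    continuous_finset_sum _ fun y _ => hterm y
  have hqcont : ∀ y : V, Continuous (fun α : ℝ => geoMix p1 p2 α y) := by
    intro y
    apply (hterm y).div hZcont
    intro α
    have : 0 < geoMix p1 p2 α y := hqpos α y
    intro h
    simp only [geoMix, h, div_zero] at this
    exact lt_irrefl _ this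
  -- continuity of KL
  have hKLcont : ∀ p : V → ℝ, FullSupport p →
      Continuous (fun α : ℝ => KL (geoMix p1 p2 α) p) := by
    intro p hp
    apply continuous_finset_sum
    intro y _
    exact (hqcont y).mul (((hqcont y).div_const _).log
      fun α => (div_pos (hqpos α y) (hp y)).ne')
  set f : ℝ → ℝ :=
    fun α => KL (geoMix p1 p2 α) p1 + c1 - (KL (geoMix p1 p2 α) p2 + c2) with hf
  have hfcont : Continuous f :=
    ((hKLcont p1 hs1).add continuous_const).sub ((hKLcont p2 hs2).add continuous_const)
  by_cases h0 : f 0 ≤ 0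
  · exact ⟨0, by norm_num, Or.inr (Or.inl ⟨rfl, by simpa [hf] using h0⟩)⟩
  by_cases h1 : 0 ≤ f 1
  · exact ⟨1, by norm_num, Or.inr (Or.inr ⟨rfl, by simpa [hf] using h1⟩)⟩
  push_neg at h0 h1
  have := intermediate_value_Icc' (by norm_num : (0:ℝ) ≤ 1) hfcont.continuousOn
  have hmem : (0:ℝ) ∈ Set.Icc (f 1) (f 0) := ⟨h1.le, h0.le⟩
  obtain ⟨α, hα, hfα⟩ := this hmem
  exact ⟨α, hα, Or.inl (by linarith [sub_eq_zero.mp (by linarith [hfα] : f α = 0)])⟩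
end

section
/- Let p¹, p² be full-support distributions on a finite alphabet V with p¹ ≠ p². For α ∈ (0,1) let q_α(y) ∝ p¹(y)^α p²(y)^{1−α}. Then for α ∈ (0,1) chosen so that KL(q_α ∥ p¹) = KL(q_α ∥ p²) (which exists by the intermediate value theorem), q_α minimizes max_i KL(p ∥ pⁱ) over all probability distributions p on V. -/
/-- The equalizing geometric mixture minimizes the worst-case KL divergence. -/
theorem stmt_10 {V : Type*} [Fintype V] [Nonempty V] (p1 p2 : V → ℝ)
    (hp1 : IsDist p1) (hp2 : IsDist p2)
    (hs1 : FullSupport p1) (hs2 : FullSupport p2)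
    (hne : p1 ≠ p2) (α : ℝ) (hα : α ∈ Set.Icc (0 : ℝ) 1)
    (hbal : KL (geoMix p1 p2 α) p1 = KL (geoMix p1 p2 α) p2) :
    ∀ p : V → ℝ, IsDist p →
      max (KL (geoMix p1 p2 α) p1) (KL (geoMix p1 p2 α) p2)
        ≤ max (KL p p1) (KL p p2) := by
  intro p hp
  obtain ⟨hα0, hα1⟩ := hα
  set Z : ℝ := ∑ y', p1 y' ^ α * p2 y' ^ (1 - α) with hZdef
  have hZpos : 0 < Z := by
    apply Finset.sum_pos (fun y _ => ?_) Finset.univ_nonempty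
    have := hs1 y; have := hs2 y
    positivity
  set q : V → ℝ := geoMix p1 p2 α with hq
  have hqpos : ∀ y, 0 < q y := by
    intro y
    have := hs1 y; have := hs2 y
    simp only [hq, geoMix]
    positivity
  have hqsum : ∑ y, q y = 1 := by
    simp only [hq, geoMix, ← hZdef]
    rw [← Finset.sum_div]
    exact div_self (ne_of_gt hZpos)
  -- key identity
  have key : ∀ r : V → ℝ, (∀ y, 0 ≤ r y) → ∑ y, r y = 1 →
      α * KL r p1 + (1 - α) * KL r p2 = KL r q - Real.log Z := by
    intro r hr hrs
    have hpt : ∀ y, α * (r y * Real.log (r y / p1 y))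
        + (1 - α) * (r y * Real.log (r y / p2 y))
        = r y * Real.log (r y / q y) - r y * Real.log Z := by
      intro y
      rcases eq_or_lt_of_le (hr y) with h | h
      · simp [← h]
      · have h1 := hs1 y; have h2 := hs2 y
        have hqy := hqpos y
        have hlq : Real.log (q y)
            = α * Real.log (p1 y) + (1 - α) * Real.log (p2 y) - Real.log Z := by
          simp only [hq, geoMix, ← hZdef]
          rw [Real.log_div (by positivity) (ne_of_gt hZpos),
              Real.log_mul (by positivity) (by positivity),
              Real.log_rpow h1, Real.log_rpow h2]
        rw [Real.log_div (ne_of_gt h) (ne_of_gt h1),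
            Real.log_div (ne_of_gt h) (ne_of_gt h2),
            Real.log_div (ne_of_gt h) (ne_of_gt hqy), hlq]
        ring
    calc α * KL r p1 + (1 - α) * KL r p2
        = ∑ y, (α * (r y * Real.log (r y / p1 y))
            + (1 - α) * (r y * Real.log (r y / p2 y))) := by
          simp only [KL, Finset.mul_sum, Finset.sum_add_distrib]
      _ = ∑ y, (r y * Real.log (r y / q y) - r y * Real.log Z) :=
          Finset.sum_congr rfl (fun y _ => hpt y)
      _ = KL r q - Real.log Z := by
          rw [Finset.sum_sub_distrib, ← Finset.sum_mul, hrs, one_mul]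
          rfl
  -- KL q q = 0
  have hKLqq : KL q q = 0 := by
    unfold KL
    apply Finset.sum_eq_zero
    intro y _
    rw [div_self (ne_of_gt (hqpos y)), Real.log_one, mul_zero]
  have hCq : KL q p1 = - Real.log Z := by
    have := key q (fun y => (hqpos y).le) hqsum
    rw [hKLqq, ← hbal] at this
    linarith
  -- Gibbs inequality: KL p q ≥ 0
  have hGibbs : 0 ≤ KL p q := by
    have hpt : ∀ y, p y - q y ≤ p y * Real.log (p y / q y) := by
      intro y
      rcases eq_or_lt_of_le (hp.1 y) with h | h
      · rw [← h]; simp [(hqpos y).le]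
      · have hqy := hqpos y
        have L1 : Real.log (q y / p y) ≤ q y / p y - 1 :=
          Real.log_le_sub_one_of_pos (by positivity)
        have L2 : Real.log (p y / q y) = - Real.log (q y / p y) := by
          rw [← Real.log_inv, inv_div]
        have L3 : p y * Real.log (q y / p y) ≤ p y * (q y / p y - 1) :=
          mul_le_mul_of_nonneg_left L1 h.le
        have L4 : p y * (q y / p y - 1) = q y - p y := by
          field_simp
        nlinarith
    have hsum : ∑ y, (p y - q y) ≤ KL p q := by
      exact Finset.sum_le_sum (fun y _ => hpt y)
    rw [Finset.sum_sub_distrib, hp.2, hqsum] at hsum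
    linarith
  -- conclude
  have hkp := key p hp.1 hp.2
  have hconv : α * KL p p1 + (1 - α) * KL p p2 ≤ max (KL p p1) (KL p p2) := by
    have h1 : KL p p1 ≤ max (KL p p1) (KL p p2) := le_max_left _ _
    have h2 : KL p p2 ≤ max (KL p p1) (KL p p2) := le_max_right _ _
    nlinarith
  have : - Real.log Z ≤ max (KL p p1) (KL p p2) := by linarith
  rw [← hbal, max_self, hCq]
  exact this
end
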